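/- In the expansion BD^{Δ,C,D} of Belnap–Dunn logic, for every valuation ν: ν(Cp) = ν(¬(Δ(p ∧ ¬p))), ν(Dp) = ν(Δ(p ∨ ¬p)), and ν(Δp) = ν((p ∨ ¬(Cp)) ∧ Dp). Hence C and D are definable in BD^{Δ,C,D} in terms of {¬, ∧, ∨, Δ}, Δ is definable in terms of {¬, ∧, ∨, C, D}, and therefore BD^{Δ} and BD^{C,D} are interdefinable. -/
import Mathlib


namespace BD15

/-- The four truth values of Belnap-Dunn logic:
`t` (true), `f` (false), `b` (both true and false), `n` (neither true nor false). -/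
inductive V4 : Type
  | t | f | b | n
deriving DecidableEq, Repr

namespace V4

/-- `a` lies above truth in the Belnap-Dunn bilattice (i.e. `a ∈ {t, b}`). -/
def hasT : V4 → Bool
  | t => true
  | b => true
  | _ => false

/-- `a` lies above falsity in the Belnap-Dunn bilattice (i.e. `a ∈ {f, b}`). -/
def hasF : V4 → Bool
  | f => true
  | b => true
  | _ => false

def ofTF : Bool → Bool → V4
  | true, true => b
  | true, false => t
  | false, true => f
  | false, false => n

/-- Interpretation of ¬: swaps `t` and `f`, fixes `b` and `n`. -/
def neg4 : V4 → V4
  | t => f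
  | f => t
  | b => b
  | n => n

/-- Interpretation of ∧: greatest lower bound in the lattice order on `V4`
with `f` least, `t` greatest, `b` and `n` incomparable. -/
def and4 (x y : V4) : V4 := ofTF (x.hasT && y.hasT) (x.hasF || y.hasF)

/-- Interpretation of ∨: least upper bound in the lattice order on `V4`
with `f` least, `t` greatest, `b` and `n` incomparable. -/
def or4 (x y : V4) : V4 := ofTF (x.hasT || y.hasT) (x.hasF && y.hasF)

/-- Interpretation of →: `a₁ → a₂ = t` if `a₁ ∉ {t, b}`, and `a₂` otherwise. -/
def imp4 (x y : V4) : V4 := if x = t ∨ x = b then y else t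

/-- The designated truth values: `t` and `b`. -/
def desig (x : V4) : Prop := x = t ∨ x = b

end V4

/-- Interpretation of the is-designated connective Δ:
`Δ(a) = t` if `a ∈ {t, b}` and `f` otherwise. -/
def deltaV (a : V4) : V4 := if a = V4.t ∨ a = V4.b then V4.t else V4.f

/-- Interpretation of the consistency connective C:
`C(a) = t` if `a ∈ {t, f, n}` and `f` otherwise. -/
def consV (a : V4) : V4 := if a = V4.b then V4.f else V4.t

/-- Interpretation of the determinedness connective D:
`D(a) = t` if `a ∈ {t, f, b}` and `f` otherwise. -/
def detV (a : V4) : V4 := if a = V4.n then V4.f else V4.t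

/-- Formulas of the common expansion BD^{Δ,C,D} of BD^{Δ} and BD^{C,D}. -/
inductive Fm : Type
  | var : ℕ → Fm
  | neg : Fm → Fm
  | and : Fm → Fm → Fm
  | or : Fm → Fm → Fm
  | delta : Fm → Fm
  | cons : Fm → Fm
  | det : Fm → Fm
deriving DecidableEq

/-- The valuation in the matrix `M^{BD,Δ,C,D}` determined by an assignment of
truth values to the propositional variables. -/
def val (v : ℕ → V4) : Fm → V4
  | .var p => v p
  | .neg A => V4.neg4 (val v A)
  | .and A B => V4.and4 (val v A) (val v B)
  | .or A B => V4.or4 (val v A) (val v B)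
  | .delta A => deltaV (val v A)
  | .cons A => consV (val v A)
  | .det A => detV (val v A)

/-- A formula contains only the connectives ¬, ∧, ∨, Δ
(the connectives of BD^{Δ}). -/
def OnlyDelta : Fm → Prop
  | .var _ => True
  | .neg A => OnlyDelta A
  | .and A B => OnlyDelta A ∧ OnlyDelta B
  | .or A B => OnlyDelta A ∧ OnlyDelta B
  | .delta A => OnlyDelta A
  | .cons _ => False
  | .det _ => False

/-- A formula contains only the connectives ¬, ∧, ∨, C, D
(the connectives of BD^{C,D}). -/
def OnlyConsDet : Fm → Prop
  | .var _ => True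
  | .neg A => OnlyConsDet A
  | .and A B => OnlyConsDet A ∧ OnlyConsDet B
  | .or A B => OnlyConsDet A ∧ OnlyConsDet B
  | .delta _ => False
  | .cons A => OnlyConsDet A
  | .det A => OnlyConsDet A

/-- in BD^{Δ,C,D}, `Cp` is logically equivalent to `¬(Δ(p ∧ ¬p))`,
`Dp` to `Δ(p ∨ ¬p)`, and `Δp` to `(p ∨ ¬(Cp)) ∧ Dp`; hence C and D are
definable in terms of {¬, ∧, ∨, Δ}, Δ is definable in terms of {¬, ∧, ∨, C, D},
and therefore BD^{Δ} and BD^{C,D} are interdefinable (in their common expansion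
BD^{Δ,C,D}). -/
theorem stmt15 :
    (∀ (p : ℕ) (v : ℕ → V4),
        val v (Fm.cons (Fm.var p)) =
          val v (Fm.neg (Fm.delta (Fm.and (Fm.var p) (Fm.neg (Fm.var p)))))) ∧
    (∀ (p : ℕ) (v : ℕ → V4),
        val v (Fm.det (Fm.var p)) =
          val v (Fm.delta (Fm.or (Fm.var p) (Fm.neg (Fm.var p))))) ∧
    (∀ (p : ℕ) (v : ℕ → V4),
        val v (Fm.delta (Fm.var p)) =
          val v (Fm.and (Fm.or (Fm.var p) (Fm.neg (Fm.cons (Fm.var p))))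
                        (Fm.det (Fm.var p)))) ∧
    (∃ (p : ℕ) (A : Fm), OnlyDelta A ∧
        ∀ v : ℕ → V4, val v (Fm.cons (Fm.var p)) = val v A) ∧
    (∃ (p : ℕ) (A : Fm), OnlyDelta A ∧
        ∀ v : ℕ → V4, val v (Fm.det (Fm.var p)) = val v A) ∧
    (∃ (p : ℕ) (A : Fm), OnlyConsDet A ∧
        ∀ v : ℕ → V4, val v (Fm.delta (Fm.var p)) = val v A) := by
  have h1 : ∀ (p : ℕ) (v : ℕ → V4),
      val v (Fm.cons (Fm.var p)) =
        val v (Fm.neg (Fm.delta (Fm.and (Fm.var p) (Fm.neg (Fm.var p))))) := by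
    intro p v
    simp only [val]
    cases v p <;> rfl
  have h2 : ∀ (p : ℕ) (v : ℕ → V4),
      val v (Fm.det (Fm.var p)) =
        val v (Fm.delta (Fm.or (Fm.var p) (Fm.neg (Fm.var p)))) := by
    intro p v
    simp only [val]
    cases v p <;> rfl
  have h3 : ∀ (p : ℕ) (v : ℕ → V4),
      val v (Fm.delta (Fm.var p)) =
        val v (Fm.and (Fm.or (Fm.var p) (Fm.neg (Fm.cons (Fm.var p))))
                      (Fm.det (Fm.var p))) := by
    intro p v
    simp only [val]
    cases v p <;> rfl
  exact ⟨h1, h2, h3,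
    ⟨0, Fm.neg (Fm.delta (Fm.and (Fm.var 0) (Fm.neg (Fm.var 0)))),
      ⟨trivial, trivial⟩, h1 0⟩,
    ⟨0, Fm.delta (Fm.or (Fm.var 0) (Fm.neg (Fm.var 0))),
      ⟨trivial, trivial⟩, h2 0⟩,
    ⟨0, Fm.and (Fm.or (Fm.var 0) (Fm.neg (Fm.cons (Fm.var 0)))) (Fm.det (Fm.var 0)),
      ⟨⟨trivial, trivial⟩, trivial⟩, h3 0⟩⟩

end BD15
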